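/- arXiv:2208.12581 — 2 statements merged into one kernel-verified Lean document; each statement's English description precedes it below -/
import Mathlib

section
/- If G is a finite non-solvable group all of whose maximal subgroups are solvable, then G/Φ(G) is a minimal simple group, i.e., a non-abelian simple group all of whose proper subgroups are solvable. -/
/-- A group is *supersolvable* if it has a chain of subgroups
`⊥ = G₀ ≤ G₁ ≤ ⋯ ≤ Gₙ = ⊤`, each normal in the whole group, with each successive
factor `G_{i+1}/G_i` cyclic (equivalently, `G_{i+1} = G_i ⊔ ⟨g⟩` for some `g`). -/
def IsSupersolvable (G : Type*) [Group G] : Prop :=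
  ∃ (n : ℕ) (s : Fin (n + 1) → Subgroup G),
    s 0 = ⊥ ∧ s (Fin.last n) = ⊤ ∧
    (∀ i, (s i).Normal) ∧
    ∀ i : Fin n, ∃ g : G, s i.castSucc ⊔ Subgroup.zpowers g = s i.succ


/-! A solvable normal subgroup `N` avoiding some maximal subgroup `M` would make `G` solvable,
since `G ⧸ N` is a quotient of `M`. So in a non-solvable group with solvable maximal subgroups
every proper normal subgroup lies in `Φ(G)`; hence `G ⧸ Φ(G)` is simple, and it inherits
non-solvability and the solvability of proper subgroups from `G`. -/

section

variable {G : Type*} [Group G]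

lemma isSolvable_of_ne_top_of_forall_isCoatom [IsCoatomic (Subgroup G)]
    (hmax : ∀ M : Subgroup G, IsCoatom M → Group.IsSolvable M) {K : Subgroup G} (hK : K ≠ ⊤) :
    Group.IsSolvable K := by
  obtain ⟨M, hM, hKM⟩ := (eq_top_or_exists_le_coatom K).resolve_left hK
  have := hmax M hM
  exact Group.isSolvable_of_isSolvable_injective (Subgroup.inclusion_injective hKM)

lemma isSolvable_quotient_of_sup_eq_top {M N : Subgroup G} [N.Normal] [Group.IsSolvable M]
    (hMN : M ⊔ N = ⊤) : Group.IsSolvable (G ⧸ N) := by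
  have hrange : ((QuotientGroup.mk' N).comp M.subtype).range = ⊤ := by
    rw [MonoidHom.range_comp, Subgroup.range_subtype,
      ← (Subgroup.comap_injective (QuotientGroup.mk'_surjective N)).eq_iff,
      Subgroup.comap_map_eq, QuotientGroup.ker_mk', hMN, Subgroup.comap_top]
  exact Group.isSolvable_of_surjective (MonoidHom.range_eq_top.mp hrange)

lemma le_frattini_of_isSolvable (hns : ¬ Group.IsSolvable G)
    (hmax : ∀ M : Subgroup G, IsCoatom M → Group.IsSolvable M)
    (N : Subgroup G) [N.Normal] [Group.IsSolvable N] : N ≤ frattini G :=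
  le_iInf₂ fun M hM => by
    by_contra hNM
    have := hmax M hM
    have := isSolvable_quotient_of_sup_eq_top (hM.2 _ (left_lt_sup.mpr hNM))
    exact hns ((Group.isSolvable_iff_subgroup_quotient N).mpr ⟨‹_›, this⟩)

lemma frattini_ne_top [IsCoatomic (Subgroup G)] [Nontrivial G] : frattini G ≠ ⊤ := fun h =>
  bot_ne_top (frattini_nongenerating (by rw [bot_sup_eq, h]))

lemma QuotientGroup.isSimpleGroup_of_forall_normal_le {N : Subgroup G} [N.Normal] (hN : N ≠ ⊤)
    (h : ∀ K : Subgroup G, K.Normal → K ≠ ⊤ → K ≤ N) : IsSimpleGroup (G ⧸ N) where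
  exists_pair_ne := (QuotientGroup.nontrivial_iff.mpr hN).exists_pair_ne
  eq_bot_or_eq_top_of_normal H hH := by
    have hsurj := QuotientGroup.mk'_surjective N
    rw [← Subgroup.map_comap_eq_self_of_surjective hsurj H]
    by_cases htop : H.comap (QuotientGroup.mk' N) = ⊤
    · exact .inr (htop ▸ Subgroup.map_top_of_surjective _ hsurj)
    · refine .inl ((Subgroup.map_eq_bot_iff _).mpr ?_)
      rw [QuotientGroup.ker_mk']
      exact h _ (hH.comap _) htop

lemma isSolvable_of_ne_top_of_surjective {Q : Type*} [Group Q] {f : G →* Q}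
    (hf : Function.Surjective f) (h : ∀ K : Subgroup G, K ≠ ⊤ → Group.IsSolvable K)
    {H : Subgroup Q} (hH : H ≠ ⊤) : Group.IsSolvable H := by
  have hcomap : H.comap f ≠ ⊤ := by
    rwa [Ne, ← Subgroup.comap_top f, (Subgroup.comap_injective hf).eq_iff]
  have := h _ hcomap
  rw [← Subgroup.map_comap_eq_self_of_surjective hf H]
  exact Group.isSolvable_of_surjective (f.subgroupMap_surjective _)

end

theorem quotient_frattini_minimal_simple {G : Type*} [Group G] [Finite G]
    (hns : ¬ IsSolvable G)
    (hmax : ∀ M : Subgroup G, IsCoatom M → IsSolvable M) :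
    IsSimpleGroup (G ⧸ frattini G) ∧
      (∃ a b : G ⧸ frattini G, a * b ≠ b * a) ∧
      ∀ H : Subgroup (G ⧸ frattini G), H ≠ ⊤ → IsSolvable H := by
  have hproper : ∀ K : Subgroup G, K ≠ ⊤ → Group.IsSolvable K := fun _ =>
    isSolvable_of_ne_top_of_forall_isCoatom hmax
  have : Nontrivial G :=
    not_subsingleton_iff_nontrivial.mp fun _ => hns (inferInstance : Group.IsSolvable G)
  have hΦ : frattini G ≠ ⊤ := frattini_ne_top
  have : Group.IsSolvable (frattini G) := hproper _ hΦ
  have hquot : ¬ Group.IsSolvable (G ⧸ frattini G) := fun h =>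
    hns ((Group.isSolvable_iff_subgroup_quotient _).mpr ⟨this, h⟩)
  refine ⟨QuotientGroup.isSimpleGroup_of_forall_normal_le hΦ fun K _ hK => ?_, ?_,
    fun H => isSolvable_of_ne_top_of_surjective (QuotientGroup.mk'_surjective _) hproper⟩
  · have := hproper K hK
    exact le_frattini_of_isSolvable hns hmax K
  · by_contra! hcomm
    exact hquot (Group.isSolvable_of_comm hcomm)
end

section
/- If G is a finite group with Φ(G) = 1 such that every maximal subgroup of G is solvable and every minimal normal subgroup of G is solvable, then G is solvable. -/
/-!
A minimal normal subgroup `N` is nontrivial, so `Φ(G) = 1` provides a maximal subgroup `M` not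
containing it, and then `G = MN`. Hence `G/N` is a quotient of the solvable group `M`, and `G` is
an extension of the solvable group `N` by `G/N`.
-/

namespace Subgroup

variable {G : Type*} [Group G]

theorem exists_isCoatom_not_le_of_not_le_frattini {H : Subgroup G} (h : ¬H ≤ frattini G) :
    ∃ M : Subgroup G, IsCoatom M ∧ ¬H ≤ M := by
  by_contra! hle
  exact h (le_iInf₂ hle)

theorem exists_minimal_normal [Finite G] [Nontrivial G] :
    ∃ N : Subgroup G, N.Normal ∧ N ≠ ⊥ ∧
      ∀ K : Subgroup G, K.Normal → K ≠ ⊥ → K ≤ N → K = N := by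
  have : WellFoundedLT (Subgroup G) := Finite.to_wellFoundedLT
  obtain ⟨N, ⟨hN, hNbot⟩, hmin⟩ := exists_minimal_of_wellFoundedLT
    (fun N : Subgroup G ↦ N.Normal ∧ N ≠ ⊥) ⟨⊤, inferInstance, top_ne_bot⟩
  exact ⟨N, hN, hNbot, fun K hK hKbot hKN ↦ le_antisymm hKN (hmin ⟨hK, hKbot⟩ hKN)⟩

theorem map_mk'_eq_top_of_sup_eq_top {M N : Subgroup G} [N.Normal] (h : M ⊔ N = ⊤) :
    M.map (QuotientGroup.mk' N) = ⊤ := by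
  have hsurj := QuotientGroup.mk'_surjective N
  rw [← map_comap_eq_self_of_surjective hsurj (M.map _), QuotientGroup.comap_map_mk', sup_comm, h,
    map_top_of_surjective _ hsurj]

theorem isSolvable_of_sup_eq_top {M N : Subgroup G} [N.Normal] [Group.IsSolvable M]
    [Group.IsSolvable N] (h : M ⊔ N = ⊤) : Group.IsSolvable G := by
  have hsurj : Function.Surjective ((QuotientGroup.mk' N).comp M.subtype) := by
    rw [← MonoidHom.range_eq_top, MonoidHom.range_comp, range_subtype]
    exact map_mk'_eq_top_of_sup_eq_top h
  have : Group.IsSolvable (G ⧸ N) := Group.isSolvable_of_surjective hsurj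
  exact (Group.isSolvable_iff_subgroup_quotient N).2 ⟨inferInstance, inferInstance⟩

end Subgroup

theorem solvable_of_frattini_trivial {G : Type*} [Group G] [Finite G]
    (hfr : frattini G = ⊥)
    (hmax : ∀ M : Subgroup G, IsCoatom M → IsSolvable M)
    (hmin : ∀ N : Subgroup G, N.Normal → N ≠ ⊥ →
      (∀ K : Subgroup G, K.Normal → K ≠ ⊥ → K ≤ N → K = N) → IsSolvable N) :
    IsSolvable G := by
  rcases subsingleton_or_nontrivial G with _ | _
  · exact (inferInstance : Group.IsSolvable G)
  obtain ⟨N, hN, hNbot, hNmin⟩ := Subgroup.exists_minimal_normal (G := G)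
  obtain ⟨M, hM, hNM⟩ :=
    Subgroup.exists_isCoatom_not_le_of_not_le_frattini (H := N) (by rwa [hfr, le_bot_iff])
  have : Group.IsSolvable M := hmax M hM
  have : Group.IsSolvable N := hmin N hN hNbot hNmin
  exact Subgroup.isSolvable_of_sup_eq_top (hM.2 _ (left_lt_sup.2 hNM))
end
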